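/- The map Proj : D → P_ed(ω₂) has the projection property: for every r₀ ∈ D and every p₁ ∈ P_ed(ω₂) with p₁ ≤ Proj(r₀), there exists r₂ ∈ D with r₂ ≤ r₀ in R and Proj(r₂) ≤ p₁ in P_ed(ω₂). -/

import Mathlib

universe u v

/-- A condition in the eventually-different poset over `I`. -/
@[ext] structure EDCond (I : Type u) : Type u where
  len : ℕ
  dom : Finset I
  f : I → ℕ → ℕ
  junk : ∀ α i, α ∉ dom ∨ len ≤ i → f α i = 0

/-- The order of the eventually-different poset. -/
instance EDCond.instPartialOrder (I : Type u) : PartialOrder (EDCond I) where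
  le p q := q.dom ⊆ p.dom ∧ q.len ≤ p.len ∧
    (∀ α ∈ q.dom, ∀ i < q.len, p.f α i = q.f α i) ∧
    (∀ i, q.len ≤ i → i < p.len → ∀ α ∈ q.dom, ∀ β ∈ q.dom, α ≠ β → p.f α i ≠ p.f β i)
  le_refl p := ⟨Finset.Subset.refl _, le_refl _, fun _ _ _ _ => rfl,
    fun i hi hi' => absurd hi' (by omega)⟩
  le_trans p q r hpq hqr := by
    obtain ⟨hd1, hn1, hv1, hg1⟩ := hpq
    obtain ⟨hd2, hn2, hv2, hg2⟩ := hqr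
    refine ⟨hd2.trans hd1, hn2.trans hn1, ?_, ?_⟩
    · intro α hα i hi
      rw [hv1 α (hd2 hα) i (lt_of_lt_of_le hi hn2), hv2 α hα i hi]
    · intro i hi hi' α hα β hβ hαβ
      by_cases hq : i < q.len
      · rw [hv1 α (hd2 hα) i hq, hv1 β (hd2 hβ) i hq]
        exact hg2 i hi hq α hα β hβ hαβ
      · exact hg1 i (by omega) hi' α (hd2 hα) β (hd2 hβ) hαβ
  le_antisymm p q hpq hqp := by
    obtain ⟨hd1, hn1, hv1, -⟩ := hpq
    obtain ⟨hd2, hn2, hv2, -⟩ := hqp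
    have hdom : p.dom = q.dom := Finset.Subset.antisymm hd2 hd1
    have hlen : p.len = q.len := le_antisymm hn2 hn1
    have hf : p.f = q.f := by
      funext α i
      by_cases hα : α ∈ q.dom
      · by_cases hi : i < q.len
        · exact hv1 α hα i hi
        · rw [p.junk α i (Or.inr (by omega)), q.junk α i (Or.inr (by omega))]
      · rw [p.junk α i (Or.inl (hdom ▸ hα)), q.junk α i (Or.inl hα)]
    exact EDCond.ext hlen hdom hf

/-- A condition of the poset `R`. -/
@[ext] structure RCond (ι : Type u) : Type u where
  d0 : Finset ι
  d1 : Finset ι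
  v0 : ι → List ℕ
  v1 : ι → ℕ
  hasStar : Bool
  star : Finset (List ℕ × ℕ)
  junk0 : ∀ α ∉ d0, v0 α = []
  junk1 : ∀ α ∉ d1, v1 α = 0
  junkStar : hasStar = false → star = ∅
  starFun : ∀ σ m m', (σ, m) ∈ star → (σ, m') ∈ star → m = m'
  starInj : ∀ σ τ m, (σ, m) ∈ star → (τ, m) ∈ star → σ.length = τ.length → σ = τ

/-- Conditions in `R` are ordered by coordinatewise extension. -/
instance RCond.instPartialOrder (ι : Type u) : PartialOrder (RCond ι) where
  le r₁ r₀ := r₀.d0 ⊆ r₁.d0 ∧ r₀.d1 ⊆ r₁.d1 ∧ (r₀.hasStar = true → r₁.hasStar = true) ∧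
    (∀ α ∈ r₀.d0, r₀.v0 α <+: r₁.v0 α) ∧ (∀ α ∈ r₀.d1, r₀.v1 α = r₁.v1 α) ∧
    (r₀.hasStar = true → r₀.star ⊆ r₁.star)
  le_refl r := ⟨Finset.Subset.refl _, Finset.Subset.refl _, fun h => h,
    fun _ _ => List.prefix_refl _, fun _ _ => rfl, fun _ => Finset.Subset.refl _⟩
  le_trans p q r hpq hqr := by
    obtain ⟨ha1, hb1, hs1, hv1, hw1, hx1⟩ := hpq
    obtain ⟨ha2, hb2, hs2, hv2, hw2, hx2⟩ := hqr
    refine ⟨ha2.trans ha1, hb2.trans hb1, fun h => hs1 (hs2 h), ?_, ?_, ?_⟩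
    · exact fun α hα => (hv2 α hα).trans (hv1 α (ha2 hα))
    · exact fun α hα => (hw2 α hα).trans (hw1 α (hb2 hα))
    · exact fun h => (hx2 h).trans (hx1 (hs2 h))
  le_antisymm p q hpq hqp := by
    obtain ⟨ha1, hb1, hs1, hv1, hw1, hx1⟩ := hpq
    obtain ⟨ha2, hb2, hs2, hv2, hw2, hx2⟩ := hqp
    have hd0 : p.d0 = q.d0 := Finset.Subset.antisymm ha2 ha1
    have hd1 : p.d1 = q.d1 := Finset.Subset.antisymm hb2 hb1
    have hstar : p.hasStar = q.hasStar := by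
      revert hs1 hs2
      cases p.hasStar <;> cases q.hasStar <;> simp
    have hv : p.v0 = q.v0 := by
      funext α
      by_cases hα : α ∈ q.d0
      · exact ((hv2 α (hd0 ▸ hα)).eq_of_length
          (Nat.le_antisymm (hv2 α (hd0 ▸ hα)).length_le (hv1 α hα).length_le))
      · rw [p.junk0 α (hd0 ▸ hα), q.junk0 α hα]
    have hw : p.v1 = q.v1 := by
      funext α
      by_cases hα : α ∈ q.d1
      · exact (hw1 α hα).symm
      · rw [p.junk1 α (hd1 ▸ hα), q.junk1 α hα]
    have hst : p.star = q.star := by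
      by_cases hq : q.hasStar = true
      · exact Finset.Subset.antisymm (hx2 (hstar ▸ hq)) (hx1 hq)
      · rw [p.junkStar (by rw [hstar]; exact Bool.not_eq_true _ ▸ (by simpa using hq)),
          q.junkStar (by simpa using hq)]
    exact RCond.ext hd0 hd1 hv hw hstar hst

/-- Membership of `r` (with associated number `n`) in the set `D`. -/
def RCond.InD {ι : Type u} (r : RCond ι) (n : ℕ) : Prop :=
  r.hasStar = true ∧ r.d0 = r.d1 ∧ (∀ α ∈ r.d0, (r.v0 α).length = n) ∧
    (∀ α ∈ r.d0, ∀ β ∈ r.d0, α ≠ β → r.v0 α ≠ r.v0 β) ∧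
    (∀ α ∈ r.d1, r.v1 α ≤ n) ∧
    (∀ σ : List ℕ, (∃ m, (σ, m) ∈ r.star) ↔ ∃ α ∈ r.d0, σ <+: r.v0 α)

/-- The subset `D` of the poset `R`. -/
def RCond.D (ι : Type u) : Set (RCond ι) := {r | ∃ n : ℕ, r.InD n}

/-- The canonical number `n_r` associated to a condition `r ∈ D`. -/
noncomputable def RCond.nOf {ι : Type u} (r : RCond ι) : ℕ :=
  if h : r.d0.Nonempty then (r.v0 h.choose).length else 0

open scoped Classical in
/-- The value of the finite partial function `r (∗)` at `σ`. -/
noncomputable def RCond.starVal {ι : Type u} (r : RCond ι) (σ : List ℕ) : ℕ :=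
  if h : ∃ m, (σ, m) ∈ r.star then h.choose else 0

open scoped Classical in
/-- The projection `Proj : D → P_ed(ω₂)`:  `Proj r` has domain `{α | (α,0) ∈ dom r}`,
`n_{Proj r} = n_r`, and `Proj r α n = r (α,0) n` for `n < r (α,1)` while
`Proj r α n = r ∗ (r (α,0) ↾ (n+1))` for `r (α,1) ≤ n < n_r`. -/
noncomputable def RCond.proj {ι : Type u} (r : RCond ι) : EDCond ι where
  len := r.nOf
  dom := r.d0
  f := fun α i =>
    if α ∈ r.d0 ∧ i < r.nOf then
      (if i < r.v1 α then (r.v0 α).getD i 0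
       else r.starVal ((r.v0 α).take (i + 1)))
    else 0
  junk := by
    intro α i h
    try beta_reduce
    rw [if_neg]
    rintro ⟨h1, h2⟩
    rcases h with h | h
    · exact h h1
    · omega

/-- The ordinal `ω₂`. -/
noncomputable def omega2 : Ordinal.{0} := (Cardinal.aleph 2).ord

/-- `ω₂` as a set (type) of ordinals. -/
def Omega2T : Type 1 := {o : Ordinal.{0} // o < omega2}

/-!
Given `r₀ ∈ D` and `p₁ ≤ Proj r₀`, first lengthen `p₁` by one column of pairwise distinct values
(adding a point to its domain, which might be empty); call the result `p`. Then build `r₂` with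
`Proj r₂ = p` exactly. A new coordinate `α` copies `p α` into `r₂ (α,0)` and sets `r₂ (α,1) = n_p`.
An old one keeps `r₀ (α,1)`, extends `r₀ (α,0)`, and `r₂ (∗)` extends `r₀ (∗)` by the value
`p α i` at `r₂ (α,0) ↾ (i+1)` for `n_{r₀} ≤ i < n_p`: these values are injective on each level
because `p ≤ Proj r₀` makes the `p α i` pairwise distinct there. Fresh large values fill in the
remaining prefixes. The distinct last column of `p` makes the sequences `r₂ (α,0)` distinct.
-/

open scoped Classical

namespace EDCond

variable {I : Type u}

theorem exists_le_len_succ_injOn (p : EDCond I) (a : I) :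
    ∃ q ≤ p, a ∈ q.dom ∧ q.len = p.len + 1 ∧ Set.InjOn (q.f · p.len) q.dom := by
  set dom := insert a p.dom
  let q : EDCond I :=
    { len := p.len + 1
      dom := dom
      f := fun α i =>
        if i < p.len then p.f α i else if i = p.len ∧ α ∈ dom then dom.toList.idxOf α else 0
      junk := by
        rintro α i (hα | hi)
        · have hα' : α ∉ p.dom := fun h => hα (Finset.mem_insert_of_mem h)
          simp [hα, p.junk α i (Or.inl hα')]
        · rw [if_neg (by omega), if_neg (by omega)] }
  have hq_last : ∀ α ∈ dom, q.f α p.len = dom.toList.idxOf α := fun α hα => by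
    simp [q, hα]
  have hinj : Set.InjOn (q.f · p.len) dom := fun α hα β hβ h => by
    simp only [hq_last α hα, hq_last β hβ] at h
    exact (List.idxOf_inj (Finset.mem_toList.mpr hα)).mp h
  refine ⟨q, ⟨Finset.subset_insert _ _, Nat.le_succ _, fun α _ i hi => if_pos hi, ?_⟩,
    Finset.mem_insert_self _ _, rfl, hinj⟩
  intro i hi hi' α hα β hβ hαβ h
  obtain rfl : i = p.len := by change i < p.len + 1 at hi'; omega
  exact hαβ (hinj (Finset.mem_insert_of_mem hα) (Finset.mem_insert_of_mem hβ) h)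

end EDCond

/-- `s` is the graph of a finite partial function `ℕ^{<ω} → ℕ` that is injective on each `ℕ^n`,
as `r (∗)` is for `r ∈ R`. -/
def IsLevelInjGraph (s : Finset (List ℕ × ℕ)) : Prop :=
  (∀ σ m m', (σ, m) ∈ s → (σ, m') ∈ s → m = m') ∧
    ∀ σ τ m, (σ, m) ∈ s → (τ, m) ∈ s → σ.length = τ.length → σ = τ

namespace IsLevelInjGraph

variable {s t : Finset (List ℕ × ℕ)}

theorem union (hs : IsLevelInjGraph s) (ht : IsLevelInjGraph t)
    (hlt : ∀ σ m τ m', (σ, m) ∈ s → (τ, m') ∈ t → σ.length < τ.length) :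
    IsLevelInjGraph (s ∪ t) := by
  constructor
  · intro σ m m' h h'
    rcases Finset.mem_union.mp h with h | h <;> rcases Finset.mem_union.mp h' with h' | h'
    · exact hs.1 σ m m' h h'
    · exact absurd (hlt σ m σ m' h h') (lt_irrefl _)
    · exact absurd (hlt σ m' σ m h' h) (lt_irrefl _)
    · exact ht.1 σ m m' h h'
  · intro σ τ m h h' hl
    rcases Finset.mem_union.mp h with h | h <;> rcases Finset.mem_union.mp h' with h' | h'
    · exact hs.2 σ τ m h h' hl
    · exact absurd hl (hlt σ m τ m h h').ne
    · exact absurd hl (hlt τ m σ m h' h).ne'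
    · exact ht.2 σ τ m h h' hl

/-- New keys get values `M + encode σ` above every value of `s`. -/
theorem exists_superset_keys_eq (hs : IsLevelInjGraph s) {P : Finset (List ℕ)}
    (hsP : ∀ σ m, (σ, m) ∈ s → σ ∈ P) :
    ∃ t, IsLevelInjGraph t ∧ s ⊆ t ∧ ∀ σ, (∃ m, (σ, m) ∈ t) ↔ σ ∈ P := by
  set M := s.sup Prod.snd + 1
  set fresh := (P.filter fun σ => ∀ m, (σ, m) ∉ s).image fun σ => (σ, M + Encodable.encode σ)
  have mem_fresh : ∀ σ m,
      (σ, m) ∈ fresh ↔ σ ∈ P ∧ (∀ m, (σ, m) ∉ s) ∧ m = M + Encodable.encode σ := by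
    intro σ m
    simp only [fresh, Finset.mem_image, Finset.mem_filter, Prod.mk.injEq]
    constructor
    · rintro ⟨σ, ⟨hP, hs⟩, rfl, rfl⟩
      exact ⟨hP, hs, rfl⟩
    · rintro ⟨hP, hs, rfl⟩
      exact ⟨σ, ⟨hP, hs⟩, rfl, rfl⟩
  have lt_M : ∀ σ m, (σ, m) ∈ s → m < M := fun σ m h =>
    Nat.lt_succ_of_le (Finset.le_sup (f := Prod.snd) h)
  refine ⟨s ∪ fresh, ⟨?_, ?_⟩, Finset.subset_union_left, fun σ => ?_⟩
  · intro σ m m' h h'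
    rcases Finset.mem_union.mp h with h | h <;> rcases Finset.mem_union.mp h' with h' | h'
    · exact hs.1 σ m m' h h'
    · exact absurd h (((mem_fresh σ m').mp h').2.1 m)
    · exact absurd h' (((mem_fresh σ m).mp h).2.1 m')
    · rw [((mem_fresh σ m).mp h).2.2, ((mem_fresh σ m').mp h').2.2]
  · intro σ τ m h h' hl
    rcases Finset.mem_union.mp h with h | h <;> rcases Finset.mem_union.mp h' with h' | h'
    · exact hs.2 σ τ m h h' hl
    · have := lt_M σ m h
      have := ((mem_fresh τ m).mp h').2.2
      omega
    · have := lt_M τ m h'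
      have := ((mem_fresh σ m).mp h).2.2
      omega
    · have := ((mem_fresh σ m).mp h).2.2
      have := ((mem_fresh τ m).mp h').2.2
      exact Encodable.encode_injective (by omega)
  · constructor
    · rintro ⟨m, hm⟩
      rcases Finset.mem_union.mp hm with hm | hm
      · exact hsP σ m hm
      · exact ((mem_fresh σ m).mp hm).1
    · intro hP
      by_cases hσ : ∃ m, (σ, m) ∈ s
      · obtain ⟨m, hm⟩ := hσ
        exact ⟨m, Finset.mem_union_left _ hm⟩
      · push Not at hσ
        exact ⟨_, Finset.mem_union_right _ ((mem_fresh σ _).mpr ⟨hP, hσ, rfl⟩)⟩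

end IsLevelInjGraph

namespace RCond

variable {ι : Type u}

theorem isLevelInjGraph_star (r : RCond ι) : IsLevelInjGraph r.star := ⟨r.starFun, r.starInj⟩

theorem starVal_mem (r : RCond ι) {σ : List ℕ} (h : ∃ m, (σ, m) ∈ r.star) :
    (σ, r.starVal σ) ∈ r.star := by
  rw [starVal, dif_pos h]
  exact h.choose_spec

theorem starVal_eq_of_mem (r : RCond ι) {σ : List ℕ} {m : ℕ} (h : (σ, m) ∈ r.star) :
    r.starVal σ = m :=
  r.starFun σ _ _ (r.starVal_mem ⟨m, h⟩) h

section InD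

variable {r : RCond ι} {n : ℕ} {α β : ι}

theorem InD.d0_eq_d1 (hr : r.InD n) : r.d0 = r.d1 := hr.2.1

theorem InD.length_v0 (hr : r.InD n) (hα : α ∈ r.d0) : (r.v0 α).length = n := hr.2.2.1 α hα

theorem InD.v0_ne (hr : r.InD n) (hα : α ∈ r.d0) (hβ : β ∈ r.d0) (hne : α ≠ β) :
    r.v0 α ≠ r.v0 β :=
  hr.2.2.2.1 α hα β hβ hne

theorem InD.v1_le (hr : r.InD n) (hα : α ∈ r.d0) : r.v1 α ≤ n :=
  hr.2.2.2.2.1 α (hr.d0_eq_d1 ▸ hα)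

theorem InD.exists_mem_star_iff (hr : r.InD n) (σ : List ℕ) :
    (∃ m, (σ, m) ∈ r.star) ↔ ∃ α ∈ r.d0, σ <+: r.v0 α :=
  hr.2.2.2.2.2 σ

theorem InD.nOf_eq (hr : r.InD n) (hne : r.d0.Nonempty) : r.nOf = n := by
  rw [nOf, dif_pos hne]
  exact hr.length_v0 hne.choose_spec

/-- With an empty domain the number `n` in `r.InD n` is arbitrary, while `r.nOf = 0`. -/
theorem InD.inD_nOf (hr : r.InD n) : r.InD r.nOf := by
  rcases r.d0.eq_empty_or_nonempty with h | h
  · obtain ⟨hstar, hd01, -, -, -, hdom⟩ := hr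
    refine ⟨hstar, hd01, by simp [h], by simp [h], by simp [← hd01, h], hdom⟩
  · rwa [hr.nOf_eq h]

end InD

theorem proj_f_of_lt_v1 (r : RCond ι) {α : ι} {i : ℕ} (hα : α ∈ r.d0) (hi : i < r.nOf)
    (h : i < r.v1 α) : r.proj.f α i = (r.v0 α).getD i 0 := by
  simp only [proj]
  rw [if_pos ⟨hα, hi⟩, if_pos h]

theorem proj_f_of_v1_le (r : RCond ι) {α : ι} {i : ℕ} (hα : α ∈ r.d0) (hi : i < r.nOf)
    (h : r.v1 α ≤ i) : r.proj.f α i = r.starVal ((r.v0 α).take (i + 1)) := by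
  simp only [proj]
  rw [if_pos ⟨hα, hi⟩, if_neg (by omega)]

variable (r : RCond ι) (p : EDCond ι)

noncomputable def liftSeq (α : ι) : List ℕ :=
  (List.range p.len).map fun i => if α ∈ r.d0 ∧ i < r.nOf then (r.v0 α).getD i 0 else p.f α i

/-- The values that `r₂ (∗)` must take above level `n_r` for `Proj r₂` to be `p`. -/
noncomputable def liftTail : Finset (List ℕ × ℕ) :=
  (r.d0 ×ˢ Finset.Ico r.nOf p.len).image fun x => ((r.liftSeq p x.1).take (x.2 + 1), p.f x.1 x.2)

variable {r p}

@[simp]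
theorem length_liftSeq (α : ι) : (r.liftSeq p α).length = p.len := by
  simp [liftSeq]

theorem getD_liftSeq {α : ι} {i : ℕ} (hi : i < p.len) :
    (r.liftSeq p α).getD i 0 = if α ∈ r.d0 ∧ i < r.nOf then (r.v0 α).getD i 0 else p.f α i := by
  rw [List.getD_eq_getElem _ _ (by simpa using hi)]
  simp [liftSeq]

theorem take_nOf_liftSeq (hr : r.InD r.nOf) (hp : p ≤ r.proj) {α : ι} (hα : α ∈ r.d0) :
    (r.liftSeq p α).take r.nOf = r.v0 α := by
  have hlen := hr.length_v0 hα
  have hnL : r.nOf ≤ p.len := hp.2.1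
  apply List.ext_getElem (by simp [hlen, hnL])
  intro i h₁ h₂
  rw [List.getElem_take, ← List.getD_eq_getElem _ 0, ← List.getD_eq_getElem _ 0,
    getD_liftSeq (by omega), if_pos ⟨hα, by omega⟩]

theorem prefix_liftSeq (hr : r.InD r.nOf) (hp : p ≤ r.proj) {α : ι} (hα : α ∈ r.d0) :
    r.v0 α <+: r.liftSeq p α :=
  take_nOf_liftSeq hr hp hα ▸ List.take_prefix _ _

theorem mem_liftTail {σ : List ℕ} {m : ℕ} : (σ, m) ∈ r.liftTail p ↔
    ∃ α ∈ r.d0, ∃ i, r.nOf ≤ i ∧ i < p.len ∧ (r.liftSeq p α).take (i + 1) = σ ∧ p.f α i = m := by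
  simp only [liftTail, Finset.mem_image, Finset.mem_product, Finset.mem_Ico, Prod.exists,
    Prod.mk.injEq]
  aesop

theorem eq_of_take_liftSeq_eq (hr : r.InD r.nOf) (hp : p ≤ r.proj) {α β : ι} {i j : ℕ}
    (hα : α ∈ r.d0) (hβ : β ∈ r.d0) (hi : r.nOf ≤ i) (hiL : i < p.len) (hjL : j < p.len)
    (h : (r.liftSeq p α).take (i + 1) = (r.liftSeq p β).take (j + 1)) : α = β ∧ i = j := by
  have hij : i = j := by
    have := congrArg List.length h
    simp only [List.length_take, length_liftSeq] at this
    omega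
  subst hij
  refine ⟨by_contra fun hne => hr.v0_ne hα hβ hne ?_, rfl⟩
  have := congrArg (List.take r.nOf) h
  rwa [List.take_take, List.take_take, min_eq_left (by omega), take_nOf_liftSeq hr hp hα,
    take_nOf_liftSeq hr hp hβ] at this

theorem isLevelInjGraph_liftTail (hr : r.InD r.nOf) (hp : p ≤ r.proj) :
    IsLevelInjGraph (r.liftTail p) := by
  constructor
  · intro σ m m' h h'
    obtain ⟨α, hα, i, hi, hiL, rfl, rfl⟩ := mem_liftTail.mp h
    obtain ⟨β, hβ, j, -, hjL, hσ, rfl⟩ := mem_liftTail.mp h'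
    obtain ⟨rfl, rfl⟩ := eq_of_take_liftSeq_eq hr hp hα hβ hi hiL hjL hσ.symm
    rfl
  · intro σ τ m h h' hl
    obtain ⟨α, hα, i, hi, hiL, rfl, rfl⟩ := mem_liftTail.mp h
    obtain ⟨β, hβ, j, -, hjL, rfl, hm⟩ := mem_liftTail.mp h'
    obtain rfl : i = j := by
      simp only [List.length_take, length_liftSeq] at hl
      omega
    obtain rfl : α = β := by_contra fun hne => hp.2.2.2 i hi hiL α hα β hβ hne hm.symm
    rfl

variable (r p) in
noncomputable def lift (s : Finset (List ℕ × ℕ)) (hs : IsLevelInjGraph s) : RCond ι where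
  d0 := p.dom
  d1 := p.dom
  v0 α := if α ∈ p.dom then r.liftSeq p α else []
  v1 α := if α ∈ p.dom then (if α ∈ r.d0 then r.v1 α else p.len) else 0
  hasStar := true
  star := s
  junk0 _ hα := if_neg hα
  junk1 _ hα := if_neg hα
  junkStar h := Bool.noConfusion h
  starFun := hs.1
  starInj := hs.2

section lift

variable {s : Finset (List ℕ × ℕ)} {hs : IsLevelInjGraph s}

theorem lift_v0_of_mem {α : ι} (hα : α ∈ p.dom) : (r.lift p s hs).v0 α = r.liftSeq p α :=
  if_pos hα

theorem lift_v1_of_mem {α : ι} (hα : α ∈ p.dom) :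
    (r.lift p s hs).v1 α = if α ∈ r.d0 then r.v1 α else p.len :=
  if_pos hα

theorem nOf_lift (hne : p.dom.Nonempty) : (r.lift p s hs).nOf = p.len := by
  have hne' : (r.lift p s hs).d0.Nonempty := hne
  rw [nOf, dif_pos hne', lift_v0_of_mem hne'.choose_spec, length_liftSeq]

theorem inD_lift (hr : r.InD r.nOf) {k : ℕ} (hk : p.len = k + 1) (hnk : r.nOf ≤ k)
    (hinj : Set.InjOn (p.f · k) p.dom)
    (hkeys : ∀ σ, (∃ m, (σ, m) ∈ s) ↔ ∃ α ∈ p.dom, σ <+: r.liftSeq p α) :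
    (r.lift p s hs).InD p.len := by
  have last_liftSeq : ∀ α, (r.liftSeq p α).getD k 0 = p.f α k := fun α => by
    rw [getD_liftSeq (by omega), if_neg (by omega)]
  refine ⟨rfl, rfl, fun α hα => by rw [lift_v0_of_mem hα, length_liftSeq],
    fun α hα β hβ hne h => ?_, fun α hα => ?_, fun σ => ?_⟩
  · rw [lift_v0_of_mem hα, lift_v0_of_mem hβ] at h
    exact hne (hinj hα hβ (by simpa only [last_liftSeq] using congrArg (List.getD · k 0) h))
  · rw [lift_v1_of_mem hα]
    split_ifs with hold
    · have := hr.v1_le hold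
      omega
    · exact le_rfl
  · exact (hkeys σ).trans
      (exists_congr fun α => and_congr_right fun hα => by rw [lift_v0_of_mem hα])

theorem lift_le (hr : r.InD r.nOf) (hp : p ≤ r.proj) (hsub : r.star ⊆ s) :
    r.lift p s hs ≤ r := by
  have hd0 : r.d0 ⊆ p.dom := hp.1
  refine ⟨hd0, hr.d0_eq_d1 ▸ hd0, fun _ => rfl, fun α hα => ?_, fun α hα => ?_, fun _ => hsub⟩
  · rw [lift_v0_of_mem (hd0 hα)]
    exact prefix_liftSeq hr hp hα
  · rw [← hr.d0_eq_d1] at hα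
    rw [lift_v1_of_mem (hd0 hα), if_pos hα]

/-- Above `r (α,1)`, the star of the lift reproduces `p`: below `n_r` through `r (∗)` and
`p ≤ Proj r`, from `n_r` on through `liftTail`. -/
theorem starVal_lift_take (hr : r.InD r.nOf) (hp : p ≤ r.proj) (hsub : r.star ∪ r.liftTail p ⊆ s)
    {α : ι} {i : ℕ} (hα : α ∈ r.d0) (hv1 : r.v1 α ≤ i) (hi : i < p.len) :
    (r.lift p s hs).starVal ((r.liftSeq p α).take (i + 1)) = p.f α i := by
  rcases lt_or_ge i r.nOf with hin | hin
  · have htake : (r.liftSeq p α).take (i + 1) = (r.v0 α).take (i + 1) := by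
      rw [← take_nOf_liftSeq hr hp hα, List.take_take, min_eq_left (by omega)]
    have hmem : ((r.v0 α).take (i + 1), r.starVal ((r.v0 α).take (i + 1))) ∈ r.star :=
      r.starVal_mem ((hr.exists_mem_star_iff _).mpr ⟨α, hα, List.take_prefix _ _⟩)
    rw [htake, starVal_eq_of_mem _ (hsub (Finset.mem_union_left _ hmem)),
      ← proj_f_of_v1_le r hα hin hv1, hp.2.2.1 α hα i hin]
  · exact starVal_eq_of_mem _ (hsub (Finset.mem_union_right _
      (mem_liftTail.mpr ⟨α, hα, i, hin, hi, rfl, rfl⟩)))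

theorem proj_lift (hr : r.InD r.nOf) (hp : p ≤ r.proj) (hne : p.dom.Nonempty)
    (hsub : r.star ∪ r.liftTail p ⊆ s) : (r.lift p s hs).proj = p := by
  have hlen : (r.lift p s hs).proj.len = p.len := nOf_lift hne
  refine EDCond.ext hlen rfl (funext fun α => funext fun i => ?_)
  by_cases hαi : α ∈ p.dom ∧ i < p.len
  swap
  · rw [not_and_or, not_lt] at hαi
    rw [(r.lift p s hs).proj.junk α i (by rwa [hlen]), p.junk α i hαi]
  obtain ⟨hα, hi⟩ := hαi
  have hi' : i < (r.lift p s hs).nOf := by rwa [nOf_lift hne]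
  by_cases hold : α ∈ r.d0
  · have hv1 : (r.lift p s hs).v1 α = r.v1 α := by rw [lift_v1_of_mem hα, if_pos hold]
    rcases lt_or_ge i (r.v1 α) with hiv | hiv
    · have hin : i < r.nOf := hiv.trans_le (hr.v1_le hold)
      rw [proj_f_of_lt_v1 _ hα hi' (hv1 ▸ hiv), hp.2.2.1 α hold i hin,
        proj_f_of_lt_v1 r hold hin hiv, lift_v0_of_mem hα, getD_liftSeq hi, if_pos ⟨hold, hin⟩]
    · rw [proj_f_of_v1_le _ hα hi' (hv1 ▸ hiv), lift_v0_of_mem hα,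
        starVal_lift_take hr hp hsub hold hiv hi]
  · rw [proj_f_of_lt_v1 _ hα hi' (by rw [lift_v1_of_mem hα, if_neg hold]; exact hi),
      lift_v0_of_mem hα, getD_liftSeq hi, if_neg (by tauto)]

end lift

theorem exists_le_proj_eq (hr : r.InD r.nOf) (hp : p ≤ r.proj) {k : ℕ} (hk : p.len = k + 1)
    (hnk : r.nOf ≤ k) (hne : p.dom.Nonempty) (hinj : Set.InjOn (p.f · k) p.dom) :
    ∃ r₂ ∈ D ι, r₂ ≤ r ∧ r₂.proj = p := by
  set P := p.dom.biUnion fun α => (r.liftSeq p α).inits.toFinset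
  have mem_P : ∀ σ, σ ∈ P ↔ ∃ α ∈ p.dom, σ <+: r.liftSeq p α := by
    simp [P, List.mem_inits]
  have star_below_liftTail : ∀ σ m τ m', (σ, m) ∈ r.star → (τ, m') ∈ r.liftTail p →
      σ.length < τ.length := by
    intro σ m τ m' hσ hτ
    obtain ⟨β, hβ, hσβ⟩ := (hr.exists_mem_star_iff σ).mp ⟨m, hσ⟩
    obtain ⟨α, -, i, hi, hiL, rfl, -⟩ := mem_liftTail.mp hτ
    have := hσβ.length_le
    rw [hr.length_v0 hβ] at this
    simp only [List.length_take, length_liftSeq]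
    omega
  have keys_mem_P : ∀ σ m, (σ, m) ∈ r.star ∪ r.liftTail p → σ ∈ P := by
    intro σ m h
    rw [mem_P]
    rcases Finset.mem_union.mp h with h | h
    · obtain ⟨β, hβ, hσβ⟩ := (hr.exists_mem_star_iff σ).mp ⟨m, h⟩
      exact ⟨β, hp.1 hβ, hσβ.trans (prefix_liftSeq hr hp hβ)⟩
    · obtain ⟨α, hα, i, -, -, rfl, -⟩ := mem_liftTail.mp h
      exact ⟨α, hp.1 hα, List.take_prefix _ _⟩
  obtain ⟨s, hs, hsub, hkeys⟩ :=
    (r.isLevelInjGraph_star.union (isLevelInjGraph_liftTail hr hp)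
      star_below_liftTail).exists_superset_keys_eq keys_mem_P
  exact ⟨r.lift p s hs, ⟨p.len, inD_lift hr hk hnk hinj fun σ => (hkeys σ).trans (mem_P σ)⟩,
    lift_le hr hp (Finset.union_subset_left hsub), proj_lift hr hp hne hsub⟩

end RCond

theorem omega2_pos : 0 < omega2 := by
  rw [omega2, Cardinal.lt_ord]
  simpa using Cardinal.aleph_pos 2

theorem stmt16 : ∀ r₀ ∈ RCond.D Omega2T, ∀ p₁ : EDCond Omega2T, p₁ ≤ RCond.proj r₀ →
    ∃ r₂ ∈ RCond.D Omega2T, r₂ ≤ r₀ ∧ RCond.proj r₂ ≤ p₁ := by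
  intro r₀ hr₀ p₁ hle
  have hr : r₀.InD r₀.nOf := hr₀.choose_spec.inD_nOf
  obtain ⟨p, hp, hα₀, hlen, hinj⟩ := p₁.exists_le_len_succ_injOn ⟨0, omega2_pos⟩
  obtain ⟨r₂, hr₂, hle₂, hproj⟩ :=
    RCond.exists_le_proj_eq hr (hp.trans hle) hlen hle.2.1 ⟨_, hα₀⟩ hinj
  exact ⟨r₂, hr₂, hle₂, hproj ▸ hp⟩
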